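/- Let d ≥ 1 and let u : ℝ^d × ℝ → ℝ^d be twice continuously differentiable with u and all its first and second partial derivatives (in space and time) bounded on ℝ^d × ℝ by a constant M. Define, for a time increment Δt > 0 and time level t, the backward-Euler foot-of-characteristic map X₁(x) = x − Δt · u(x, t − Δt). Then there exists a constant C, depending only on d and M, such that for all x ∈ ℝ^d, all t ∈ ℝ and all Δt ∈ (0, 1]: ‖ (u(x,t) − u(X₁(x), t − Δt)) / Δt − [ (∂u/∂t)(x,t) + (Du_x(x,t))(u(x,t)) ] ‖ ≤ C Δt, i.e. the first-order characteristic finite difference approximates the material derivative (∂u/∂t + (u·∇)u)(x,t) with error O(Δt). -/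

import Mathlib

/-!
With `p = (x, t)` and `w = u (x, t - Δt)`, the foot of the characteristic is `p - Δt • (w, 1)`,
so the quotient is a backward difference quotient of `u` at `p` in the direction `(w, 1)`.
A second-order Taylor bound makes it `Du(p) (w, 1) + O(Δt)`; replacing `w` by `u (x, t)` costs
`‖Du‖ ‖w - u (x, t)‖ = O(Δt)` since `u` is Lipschitz in time, and
`Du(p) (v, 1) = ∂ₜu(p) + D_x u(p) v` is the material derivative.
-/

theorem norm_fderiv_fderiv_eq_norm_iteratedFDeriv_two {𝕜 E F : Type*}
    [NontriviallyNormedField 𝕜] [NormedAddCommGroup E] [NormedSpace 𝕜 E] [NormedAddCommGroup F] [NormedSpace 𝕜 F]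
    (f : E → F) (x : E) :
    ‖fderiv 𝕜 (fderiv 𝕜 f) x‖ = ‖iteratedFDeriv 𝕜 2 f x‖ := by
  rw [← norm_iteratedFDeriv_one, norm_iteratedFDeriv_fderiv]

theorem fderiv_apply_prodMk_one {𝕜 E F : Type*} [NontriviallyNormedField 𝕜]
    [NormedAddCommGroup E] [NormedSpace 𝕜 E] [NormedAddCommGroup F] [NormedSpace 𝕜 F]
    {f : E × 𝕜 → F} {x : E} {t : 𝕜} (hf : DifferentiableAt 𝕜 f (x, t)) (v : E) :
    fderiv 𝕜 f (x, t) (v, 1) =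
      deriv (fun s => f (x, s)) t + fderiv 𝕜 (fun y => f (y, t)) x v := by
  have htime : deriv (fun s => f (x, s)) t = fderiv 𝕜 f (x, t) (0, 1) :=
    (hf.hasFDerivAt.comp_hasDerivAt t ((hasDerivAt_const t x).prodMk (hasDerivAt_id t))).deriv
  have hspace :
      fderiv 𝕜 (fun y => f (y, t)) x = (fderiv 𝕜 f (x, t)).comp (.inl 𝕜 E 𝕜) :=
    (hf.hasFDerivAt.comp x (hasFDerivAt_prodMk_left x t)).fderiv
  rw [htime, hspace, ContinuousLinearMap.comp_apply, ContinuousLinearMap.inl_apply, ← map_add,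
    Prod.mk_add_mk, zero_add, add_zero]

section SecondOrder

variable {G F : Type*} [NormedAddCommGroup G] [NormedSpace ℝ G] [NormedAddCommGroup F]
  [NormedSpace ℝ F] {f : G → F} {K : ℝ}

theorem norm_sub_sub_fderiv_le_of_norm_fderiv_fderiv_le (hf : Differentiable ℝ f)
    (hf' : Differentiable ℝ (fderiv ℝ f)) (hK : ∀ y, ‖fderiv ℝ (fderiv ℝ f) y‖ ≤ K) (p q : G) :
    ‖f q - f p - fderiv ℝ f p (q - p)‖ ≤ K * ‖q - p‖ ^ 2 := by
  have hK0 : 0 ≤ K := (norm_nonneg (fderiv ℝ (fderiv ℝ f) p)).trans (hK p)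
  have hball : ∀ y ∈ Metric.closedBall p ‖q - p‖,
      ‖fderiv ℝ f y - fderiv ℝ f p‖ ≤ K * ‖q - p‖ := fun y hy =>
    calc ‖fderiv ℝ f y - fderiv ℝ f p‖ ≤ K * ‖y - p‖ :=
          convex_univ.norm_image_sub_le_of_norm_fderiv_le (fun z _ => hf' z)
            (fun z _ => hK z) trivial trivial
      _ ≤ K * ‖q - p‖ := by gcongr; exact mem_closedBall_iff_norm.mp hy
  calc ‖f q - f p - fderiv ℝ f p (q - p)‖ ≤ K * ‖q - p‖ * ‖q - p‖ :=
        (convex_closedBall p ‖q - p‖).norm_image_sub_le_of_norm_fderiv_le' (fun z _ => hf z)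
          hball (Metric.mem_closedBall_self (norm_nonneg _))
          (mem_closedBall_iff_norm.mpr le_rfl)
    _ = K * ‖q - p‖ ^ 2 := by ring

theorem norm_inv_smul_sub_sub_fderiv_le_of_norm_fderiv_fderiv_le (hf : Differentiable ℝ f)
    (hf' : Differentiable ℝ (fderiv ℝ f)) (hK : ∀ y, ‖fderiv ℝ (fderiv ℝ f) y‖ ≤ K) (p v : G)
    {h : ℝ} (hh : 0 < h) :
    ‖h⁻¹ • (f p - f (p - h • v)) - fderiv ℝ f p v‖ ≤ K * h * ‖v‖ ^ 2 := by
  have hquot : h⁻¹ • (f p - f (p - h • v)) - fderiv ℝ f p v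
      = -h⁻¹ • (f (p - h • v) - f p - fderiv ℝ f p (p - h • v - p)) := by
    rw [sub_sub_cancel_left, map_neg, map_smul]
    match_scalars <;> field_simp
  rw [hquot, norm_smul, norm_neg, norm_inv, Real.norm_of_nonneg hh.le]
  calc _ ≤ h⁻¹ * (K * ‖p - h • v - p‖ ^ 2) := by
        gcongr
        exact norm_sub_sub_fderiv_le_of_norm_fderiv_fderiv_le hf hf' hK p (p - h • v)
    _ = K * h * ‖v‖ ^ 2 := by
        rw [sub_sub_cancel_left, norm_neg, norm_smul, Real.norm_of_nonneg hh.le]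
        field_simp

end SecondOrder

theorem backward_euler_material_derivative_consistency_general
    (d : ℕ) (M : ℝ) :
    ∃ C : ℝ, ∀ (u : EuclideanSpace ℝ (Fin d) × ℝ → EuclideanSpace ℝ (Fin d)),
      ContDiff ℝ 2 u →
      (∀ i : ℕ, i ≤ 2 → ∀ p : EuclideanSpace ℝ (Fin d) × ℝ,
        ‖iteratedFDeriv ℝ i u p‖ ≤ M) →
      ∀ (x : EuclideanSpace ℝ (Fin d)) (t Δt : ℝ), 0 < Δt → Δt ≤ 1 →
        ‖Δt⁻¹ • (u (x, t) - u (x - Δt • u (x, t - Δt), t - Δt))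
            - (deriv (fun s : ℝ => u (x, s)) t
                + (fderiv ℝ (fun y : EuclideanSpace ℝ (Fin d) => u (y, t)) x) (u (x, t)))‖
          ≤ C * Δt := by
  refine ⟨M * (M + 1) ^ 2 + M * M, fun u hu hb x t Δt hΔt _ => ?_⟩
  have hM : 0 ≤ M := (norm_nonneg _).trans (hb 0 (by norm_num) (x, t))
  have hu1 : Differentiable ℝ u := hu.differentiable (by norm_num)
  have hu2 : Differentiable ℝ (fderiv ℝ u) :=
    (hu.fderiv_right (m := 1) le_rfl).differentiable one_ne_zero
  have hb0 : ∀ p, ‖u p‖ ≤ M := fun p => by simpa using hb 0 (by norm_num) p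
  have hb1 : ∀ p, ‖fderiv ℝ u p‖ ≤ M := fun p => by
    simpa [norm_iteratedFDeriv_one] using hb 1 (by norm_num) p
  have hb2 : ∀ p, ‖fderiv ℝ (fderiv ℝ u) p‖ ≤ M := fun p => by
    simpa [norm_fderiv_fderiv_eq_norm_iteratedFDeriv_two] using hb 2 le_rfl p
  set w := u (x, t - Δt)
  have hfoot : (x - Δt • w, t - Δt) = (x, t) - Δt • (w, (1 : ℝ)) := by ext <;> simp
  have hw : ‖(w, (1 : ℝ))‖ ≤ M + 1 := by
    rw [Prod.norm_def, norm_one]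
    exact max_le (by linarith [hb0 (x, t - Δt)]) (by linarith)
  have hdrift : ‖w - u (x, t)‖ ≤ M * Δt := by
    have := convex_univ.norm_image_sub_le_of_norm_fderiv_le (fun z _ => hu1 z)
      (fun z _ => hb1 z) (Set.mem_univ (x, t)) (Set.mem_univ (x, t - Δt))
    simpa [Prod.norm_def, abs_of_pos hΔt, hΔt.le] using this
  rw [← fderiv_apply_prodMk_one (hu1 _), hfoot]
  set A := fderiv ℝ u (x, t)
  calc _ ≤ ‖Δt⁻¹ • (u (x, t) - u ((x, t) - Δt • (w, 1))) - A (w, 1)‖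
          + ‖A (w, 1) - A (u (x, t), 1)‖ := norm_sub_le_norm_sub_add_norm_sub _ _ _
    _ ≤ M * Δt * (M + 1) ^ 2 + M * (M * Δt) := by
        gcongr
        · exact (norm_inv_smul_sub_sub_fderiv_le_of_norm_fderiv_fderiv_le hu1 hu2 hb2 _ _
            hΔt).trans (by gcongr)
        · rw [← map_sub, Prod.mk_sub_mk, sub_self]
          refine (A.le_of_opNorm_le (hb1 _) _).trans ?_
          rw [Prod.norm_def, norm_zero, max_eq_left (norm_nonneg _)]
          gcongr
    _ = (M * (M + 1) ^ 2 + M * M) * Δt := by ring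

/-- **First-order consistency of the backward-Euler characteristic finite difference.**
For every dimension `d ≥ 1` and bound `M`, there is a constant `C` (depending only on `d`
and `M`) such that: for every `C²` field `u : ℝ^d × ℝ → ℝ^d` whose value and first and
second derivatives are bounded by `M` on `ℝ^d × ℝ`, every `x`, `t`, and every time increment
`Δt ∈ (0, 1]`, the backward-Euler characteristic difference quotient
`(u(x,t) − u(x − Δt·u(x, t−Δt), t−Δt)) / Δt` approximates the material derivative
`(∂u/∂t)(x,t) + (D_x u (x,t)) (u(x,t))` with error at most `C·Δt`. -/
theorem backward_euler_material_derivative_consistency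
    (d : ℕ) (hd : 1 ≤ d) (M : ℝ) :
    ∃ C : ℝ, ∀ (u : EuclideanSpace ℝ (Fin d) × ℝ → EuclideanSpace ℝ (Fin d)),
      ContDiff ℝ 2 u →
      (∀ i : ℕ, i ≤ 2 → ∀ p : EuclideanSpace ℝ (Fin d) × ℝ,
        ‖iteratedFDeriv ℝ i u p‖ ≤ M) →
      ∀ (x : EuclideanSpace ℝ (Fin d)) (t Δt : ℝ), 0 < Δt → Δt ≤ 1 →
        ‖Δt⁻¹ • (u (x, t) - u (x - Δt • u (x, t - Δt), t - Δt))
            - (deriv (fun s : ℝ => u (x, s)) t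
                + (fderiv ℝ (fun y : EuclideanSpace ℝ (Fin d) => u (y, t)) x) (u (x, t)))‖
          ≤ C * Δt :=
  backward_euler_material_derivative_consistency_general d M
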